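/- arXiv:2510.01846 — 2 statements merged into one kernel-verified Lean document; each statement's English description precedes it below -/
import Mathlib

section
/- Let ω ⊆ ℝ² be open, h > 0, and μ, η ∈ ℝ. Let w : ℝ² → ℝ and v : ℝ → ℝ be smooth (C^∞) functions satisfying −(∂_xx w + ∂_yy w) = μ·w on ω and −v'' = η·v on [0,h]. Define F : ℝ³ → ℝ³ by F(x,y,t) := (v'(t)·∂_x w(x,y), v'(t)·∂_y w(x,y), μ·v(t)·w(x,y)). Then on ω × (0,h): div F = 0 and curl (curl F) = (μ + η)·F. Moreover, if v'(0) = v'(h) = 0, then for every (x,y) ∈ ω and t ∈ {0,h} the tangential part of F vanishes, i.e. F₁(x,y,t) = F₂(x,y,t) = 0, so e₃ × F = 0 on the horizontal faces ω × {0,h}. -/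
noncomputable section

/-- Partial derivative in the first variable `x` of `g : ℝ³ → ℝ`, points written `(x, y, t)`. -/
def pdx (g : ℝ × ℝ × ℝ → ℝ) (p : ℝ × ℝ × ℝ) : ℝ :=
  deriv (fun s => g (s, p.2.1, p.2.2)) p.1

/-- Partial derivative in the second variable `y`. -/
def pdy (g : ℝ × ℝ × ℝ → ℝ) (p : ℝ × ℝ × ℝ) : ℝ :=
  deriv (fun s => g (p.1, s, p.2.2)) p.2.1

/-- Partial derivative in the third variable `t`. -/
def pdt (g : ℝ × ℝ × ℝ → ℝ) (p : ℝ × ℝ × ℝ) : ℝ :=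
  deriv (fun s => g (p.1, p.2.1, s)) p.2.2

/-- curl F = (∂_y F₃ − ∂_t F₂, ∂_t F₁ − ∂_x F₃, ∂_x F₂ − ∂_y F₁). -/
def curl3 (F : ℝ × ℝ × ℝ → ℝ × ℝ × ℝ) (p : ℝ × ℝ × ℝ) : ℝ × ℝ × ℝ :=
  (pdy (fun q => (F q).2.2) p - pdt (fun q => (F q).2.1) p,
   pdt (fun q => (F q).1) p - pdx (fun q => (F q).2.2) p,
   pdx (fun q => (F q).2.1) p - pdy (fun q => (F q).1) p)

/-- div F = ∂_x F₁ + ∂_y F₂ + ∂_t F₃. -/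
def div3 (F : ℝ × ℝ × ℝ → ℝ × ℝ × ℝ) (p : ℝ × ℝ × ℝ) : ℝ :=
  pdx (fun q => (F q).1) p + pdy (fun q => (F q).2.1) p + pdt (fun q => (F q).2.2) p

/-- ∇g = (∂_x g, ∂_y g, ∂_t g). -/
def grad3 (g : ℝ × ℝ × ℝ → ℝ) (p : ℝ × ℝ × ℝ) : ℝ × ℝ × ℝ :=
  (pdx g p, pdy g p, pdt g p)

/-- Scalar Laplacian Δ₃ g = ∂_xx g + ∂_yy g + ∂_tt g. -/
def lap3 (g : ℝ × ℝ × ℝ → ℝ) (p : ℝ × ℝ × ℝ) : ℝ :=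
  pdx (pdx g) p + pdy (pdy g) p + pdt (pdt g) p

/-- Componentwise (vector) Laplacian ΔF = (Δ₃F₁, Δ₃F₂, Δ₃F₃). -/
def vecLap (F : ℝ × ℝ × ℝ → ℝ × ℝ × ℝ) (p : ℝ × ℝ × ℝ) : ℝ × ℝ × ℝ :=
  (lap3 (fun q => (F q).1) p, lap3 (fun q => (F q).2.1) p, lap3 (fun q => (F q).2.2) p)

/-- Partial derivative in `x` for `g : ℝ² → ℝ`. -/
def pdx2 (g : ℝ × ℝ → ℝ) (p : ℝ × ℝ) : ℝ :=
  deriv (fun s => g (s, p.2)) p.1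

/-- Partial derivative in `y` for `g : ℝ² → ℝ`. -/
def pdy2 (g : ℝ × ℝ → ℝ) (p : ℝ × ℝ) : ℝ :=
  deriv (fun s => g (p.1, s)) p.2

/-- Cross product on ℝ³ = ℝ × ℝ × ℝ. -/
def cross3 (a b : ℝ × ℝ × ℝ) : ℝ × ℝ × ℝ :=
  (a.2.1 * b.2.2 - a.2.2 * b.2.1,
   a.2.2 * b.1 - a.1 * b.2.2,
   a.1 * b.2.1 - a.2.1 * b.1)


section Helpers

lemma diff_slice1 {g : ℝ × ℝ → ℝ} (hg : Differentiable ℝ g) (y : ℝ) :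
    Differentiable ℝ (fun s => g (s, y)) :=
  hg.comp (differentiable_id.prodMk (differentiable_const y))

lemma diff_slice2 {g : ℝ × ℝ → ℝ} (hg : Differentiable ℝ g) (x : ℝ) :
    Differentiable ℝ (fun s => g (x, s)) :=
  hg.comp ((differentiable_const x).prodMk differentiable_id)

lemma pdx2_eq {g : ℝ × ℝ → ℝ} (hg : Differentiable ℝ g) (p : ℝ × ℝ) :
    pdx2 g p = fderiv ℝ g p (1, 0) := by
  have h : HasDerivAt (fun s => g (s, p.2)) (fderiv ℝ g (p.1, p.2) ((1 : ℝ), (0 : ℝ))) p.1 :=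
    (hg (p.1, p.2)).hasFDerivAt.comp_hasDerivAt p.1
      ((hasDerivAt_id p.1).prodMk (hasDerivAt_const p.1 p.2))
  simpa [pdx2] using h.deriv

lemma pdy2_eq {g : ℝ × ℝ → ℝ} (hg : Differentiable ℝ g) (p : ℝ × ℝ) :
    pdy2 g p = fderiv ℝ g p (0, 1) := by
  have h : HasDerivAt (fun s => g (p.1, s)) (fderiv ℝ g (p.1, p.2) ((0 : ℝ), (1 : ℝ))) p.2 :=
    (hg (p.1, p.2)).hasFDerivAt.comp_hasDerivAt p.2
      ((hasDerivAt_const p.2 p.1).prodMk (hasDerivAt_id p.2))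
  simpa [pdy2] using h.deriv

lemma pdx2_contDiff {g : ℝ × ℝ → ℝ} (hg : ContDiff ℝ (⊤ : ℕ∞) g) :
    ContDiff ℝ (⊤ : ℕ∞) (pdx2 g) := by
  have : pdx2 g = fun p => fderiv ℝ g p (1, 0) :=
    funext (pdx2_eq (hg.differentiable (by simp)))
  rw [this]
  exact (hg.fderiv_right (by simp)).clm_apply contDiff_const

lemma pdy2_contDiff {g : ℝ × ℝ → ℝ} (hg : ContDiff ℝ (⊤ : ℕ∞) g) :
    ContDiff ℝ (⊤ : ℕ∞) (pdy2 g) := by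
  have : pdy2 g = fun p => fderiv ℝ g p (0, 1) :=
    funext (pdy2_eq (hg.differentiable (by simp)))
  rw [this]
  exact (hg.fderiv_right (by simp)).clm_apply contDiff_const

lemma clairaut {g : ℝ × ℝ → ℝ} (hg : ContDiff ℝ (⊤ : ℕ∞) g) (p : ℝ × ℝ) :
    pdx2 (pdy2 g) p = pdy2 (pdx2 g) p := by
  have hgd : Differentiable ℝ g := hg.differentiable (by simp)
  have hfd : Differentiable ℝ (fderiv ℝ g) :=
    (hg.fderiv_right (m := (⊤ : ℕ∞)) (by simp)).differentiable (by simp)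
  have key : ∀ a b : ℝ × ℝ, fderiv ℝ (fun q => fderiv ℝ g q b) p a
      = fderiv ℝ (fderiv ℝ g) p a b := by
    intro a b
    rw [fderiv_clm_apply (hfd p) (differentiableAt_const b)]
    simp [fderiv_const, ContinuousLinearMap.comp_apply, ContinuousLinearMap.flip_apply]
  have e1 : pdx2 g = fun q => fderiv ℝ g q (1, 0) := funext (pdx2_eq hgd)
  have e2 : pdy2 g = fun q => fderiv ℝ g q (0, 1) := funext (pdy2_eq hgd)
  have hsymm : fderiv ℝ (fderiv ℝ g) p (1, 0) (0, 1)
      = fderiv ℝ (fderiv ℝ g) p (0, 1) (1, 0) :=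
    (hg.contDiffAt.isSymmSndFDerivAt (by simp [minSmoothness_of_isRCLikeNormedField]; exact WithTop.coe_le_coe.mpr (le_top : (2 : ℕ∞) ≤ ⊤))) _ _
  calc pdx2 (pdy2 g) p = fderiv ℝ (pdy2 g) p (1, 0) :=
        pdx2_eq ((pdy2_contDiff hg).differentiable (by simp)) p
    _ = fderiv ℝ (fderiv ℝ g) p (1, 0) (0, 1) := by rw [e2, key]
    _ = fderiv ℝ (fderiv ℝ g) p (0, 1) (1, 0) := hsymm
    _ = fderiv ℝ (pdx2 g) p (0, 1) := by rw [e1, key]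
    _ = pdy2 (pdx2 g) p :=
        (pdy2_eq ((pdx2_contDiff hg).differentiable (by simp)) p).symm

lemma curl3_TE (μ : ℝ) (w : ℝ × ℝ → ℝ) (v : ℝ → ℝ)
    (hw : ContDiff ℝ (⊤ : ℕ∞) w) (hv : ContDiff ℝ (⊤ : ℕ∞) v) :
    curl3 (fun p => (deriv v p.2.2 * pdx2 w (p.1, p.2.1),
       deriv v p.2.2 * pdy2 w (p.1, p.2.1),
       μ * v p.2.2 * w (p.1, p.2.1))) =
    fun p => ((μ * v p.2.2 - deriv (deriv v) p.2.2) * pdy2 w (p.1, p.2.1),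
       (deriv (deriv v) p.2.2 - μ * v p.2.2) * pdx2 w (p.1, p.2.1), (0 : ℝ)) := by
  have hwd : Differentiable ℝ w := hw.differentiable (by simp)
  have hwx : ContDiff ℝ (⊤ : ℕ∞) (pdx2 w) := pdx2_contDiff hw
  have hwy : ContDiff ℝ (⊤ : ℕ∞) (pdy2 w) := pdy2_contDiff hw
  have hwxd : Differentiable ℝ (pdx2 w) := hwx.differentiable (by simp)
  have hwyd : Differentiable ℝ (pdy2 w) := hwy.differentiable (by simp)
  have hv1 : Differentiable ℝ (deriv v) :=
    (contDiff_infty_iff_deriv.mp hv).2.differentiable (by simp)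
  funext p
  obtain ⟨x, y, t⟩ := p
  simp only [curl3, pdx, pdy, pdt]
  have c1 : deriv (fun s => μ * v t * w (x, s)) y = μ * v t * pdy2 w (x, y) := by
    rw [deriv_const_mul _ ((diff_slice2 hwd x) y)]; rfl
  have c2 : deriv (fun s => deriv v s * pdy2 w (x, y)) t
      = deriv (deriv v) t * pdy2 w (x, y) := deriv_mul_const (hv1 t) _
  have c3 : deriv (fun s => deriv v s * pdx2 w (x, y)) t
      = deriv (deriv v) t * pdx2 w (x, y) := deriv_mul_const (hv1 t) _
  have c4 : deriv (fun s => μ * v t * w (s, y)) x = μ * v t * pdx2 w (x, y) := by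
    rw [deriv_const_mul _ ((diff_slice1 hwd y) x)]; rfl
  have c5 : deriv (fun s => deriv v t * pdy2 w (s, y)) x
      = deriv v t * pdx2 (pdy2 w) (x, y) := by
    rw [deriv_const_mul _ ((diff_slice1 hwyd y) x)]; rfl
  have c6 : deriv (fun s => deriv v t * pdx2 w (x, s)) y
      = deriv v t * pdy2 (pdx2 w) (x, y) := by
    rw [deriv_const_mul _ ((diff_slice2 hwxd x) y)]; rfl
  rw [c1, c2, c3, c4, c5, c6, clairaut hw]
  refine Prod.ext ?_ (Prod.ext ?_ ?_) <;> simp <;> ring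

end Helpers

/-- the TE-family `F = (v'·∂ₓw, v'·∂_y w, μ·v·w)` is divergence free and
satisfies `curl curl F = (μ+η)·F` on `ω × (0,h)`; if moreover `v'(0) = v'(h) = 0`, the
tangential part of `F` vanishes on the horizontal faces `ω × {0,h}`, so `e₃ × F = 0` there. -/
theorem TE_mode_eigenfunction (ω : Set (ℝ × ℝ)) (hω : IsOpen ω) (h : ℝ) (hh : 0 < h)
    (μ η : ℝ) (w : ℝ × ℝ → ℝ) (v : ℝ → ℝ)
    (hw : ContDiff ℝ (⊤ : ℕ∞) w) (hv : ContDiff ℝ (⊤ : ℕ∞) v)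
    (hweig : ∀ q ∈ ω, -(pdx2 (pdx2 w) q + pdy2 (pdy2 w) q) = μ * w q)
    (hveig : ∀ t ∈ Set.Icc (0 : ℝ) h, -(deriv (deriv v) t) = η * v t)
    (F : ℝ × ℝ × ℝ → ℝ × ℝ × ℝ)
    (hF : F = fun p =>
      (deriv v p.2.2 * pdx2 w (p.1, p.2.1),
       deriv v p.2.2 * pdy2 w (p.1, p.2.1),
       μ * v p.2.2 * w (p.1, p.2.1))) :
    (∀ p : ℝ × ℝ × ℝ, (p.1, p.2.1) ∈ ω → p.2.2 ∈ Set.Ioo (0 : ℝ) h →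
      div3 F p = 0 ∧ curl3 (curl3 F) p = (μ + η) • F p) ∧
    (deriv v 0 = 0 → deriv v h = 0 →
      ∀ p : ℝ × ℝ × ℝ, (p.1, p.2.1) ∈ ω → (p.2.2 = 0 ∨ p.2.2 = h) →
        (F p).1 = 0 ∧ (F p).2.1 = 0 ∧ cross3 ((0 : ℝ), (0 : ℝ), (1 : ℝ)) (F p) = 0) := by
  subst hF
  have hw' : ContDiff ℝ (⊤ : ℕ∞) w := hw.of_le (by simp)
  have hv' : ContDiff ℝ (⊤ : ℕ∞) v := hv.of_le (by simp)
  have hwd : Differentiable ℝ w := hw'.differentiable (by simp)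
  have hvd : Differentiable ℝ v := hv'.differentiable (by simp)
  have hwxd : Differentiable ℝ (pdx2 w) :=
    (pdx2_contDiff hw').differentiable (by simp)
  have hwyd : Differentiable ℝ (pdy2 w) :=
    (pdy2_contDiff hw').differentiable (by simp)
  have hv1c : ContDiff ℝ (⊤ : ℕ∞) (deriv v) := (contDiff_infty_iff_deriv.mp hv').2
  have hv1d : Differentiable ℝ (deriv v) := hv1c.differentiable (by simp)
  have hv2d : Differentiable ℝ (deriv (deriv v)) :=
    (contDiff_infty_iff_deriv.mp hv1c).2.differentiable (by simp)
  constructor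
  · rintro ⟨x, y, t⟩ hxy ht
    have hv2 : deriv (deriv v) t = -(η * v t) := by
      have := hveig t ⟨ht.1.le, ht.2.le⟩; linarith
    have hv3 : deriv (deriv (deriv v)) t = -(η * deriv v t) := by
      have hev : deriv (deriv v) =ᶠ[nhds t] fun s => -η * v s := by
        filter_upwards [Ioo_mem_nhds ht.1 ht.2] with s hs
        have := hveig s ⟨hs.1.le, hs.2.le⟩; linarith
      rw [hev.deriv_eq, deriv_const_mul _ (hvd t)]; ring
    have hlap : pdx2 (pdx2 w) (x, y) + pdy2 (pdy2 w) (x, y) = -(μ * w (x, y)) := by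
      have := hweig (x, y) hxy; linarith
    constructor
    · simp only [div3, pdx, pdy, pdt]
      have e1 : deriv (fun s => deriv v t * pdx2 w (s, y)) x
          = deriv v t * pdx2 (pdx2 w) (x, y) := by
        rw [deriv_const_mul _ ((diff_slice1 hwxd y) x)]; rfl
      have e2 : deriv (fun s => deriv v t * pdy2 w (x, s)) y
          = deriv v t * pdy2 (pdy2 w) (x, y) := by
        rw [deriv_const_mul _ ((diff_slice2 hwyd x) y)]; rfl
      have e3 : deriv (fun s => μ * v s * w (x, y)) t = μ * deriv v t * w (x, y) := by
        rw [deriv_mul_const ((hvd t).const_mul μ), deriv_const_mul _ (hvd t)]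
      rw [e1, e2, e3]
      linear_combination deriv v t * hlap
    · rw [curl3_TE μ w v hw' hv']
      simp only [curl3, pdx, pdy, pdt]
      have d1 : deriv (fun _ : ℝ => (0 : ℝ)) y = 0 := deriv_const y 0
      have d4 : deriv (fun _ : ℝ => (0 : ℝ)) x = 0 := deriv_const x 0
      have d2 : deriv (fun s => (deriv (deriv v) s - μ * v s) * pdx2 w (x, y)) t
          = (deriv (deriv (deriv v)) t - μ * deriv v t) * pdx2 w (x, y) := by
        rw [deriv_mul_const (c := fun s => deriv (deriv v) s - μ * v s)
            ((hv2d t).sub ((hvd t).const_mul μ)),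
          deriv_fun_sub (hv2d t) ((hvd t).const_mul μ), deriv_const_mul _ (hvd t)]
      have d3 : deriv (fun s => (μ * v s - deriv (deriv v) s) * pdy2 w (x, y)) t
          = (μ * deriv v t - deriv (deriv (deriv v)) t) * pdy2 w (x, y) := by
        rw [deriv_mul_const (c := fun s => μ * v s - deriv (deriv v) s)
            (((hvd t).const_mul μ).sub (hv2d t)),
          deriv_fun_sub ((hvd t).const_mul μ) (hv2d t), deriv_const_mul _ (hvd t)]
      have d5 : deriv (fun s => (deriv (deriv v) t - μ * v t) * pdx2 w (s, y)) x
          = (deriv (deriv v) t - μ * v t) * pdx2 (pdx2 w) (x, y) := by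
        rw [deriv_const_mul _ ((diff_slice1 hwxd y) x)]; rfl
      have d6 : deriv (fun s => (μ * v t - deriv (deriv v) t) * pdy2 w (x, s)) y
          = (μ * v t - deriv (deriv v) t) * pdy2 (pdy2 w) (x, y) := by
        rw [deriv_const_mul _ ((diff_slice2 hwyd x) y)]; rfl
      rw [d1, d2, d3, d4, d5, d6]
      refine Prod.ext ?_ (Prod.ext ?_ ?_) <;> simp [smul_eq_mul]
      · rw [hv3]; ring
      · rw [hv3]; ring
      · rw [hv2]; linear_combination (-(η * v t) - μ * v t) * hlap
  · rintro h0 hh' ⟨x, y, t⟩ hxy ht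
    rcases ht with rfl | rfl
    · exact ⟨by simp [h0], by simp [h0], by simp [cross3, h0, Prod.ext_iff]⟩
    · exact ⟨by simp [hh'], by simp [hh'], by simp [cross3, hh', Prod.ext_iff]⟩
end
end

section
/- Let ω ⊆ ℝ² be open, h > 0, and d ∈ ℝ. Let H₁, H₂ : ℝ² → ℝ be C¹ functions satisfying ∂_x H₂ = ∂_y H₁ and ∂_x H₁ + ∂_y H₂ = 0 on ω (i.e. (H₁,H₂) is a harmonic 1-form on ω), and let u : ℝ → ℝ be C² with −u'' = d·u on [0,h] and u(0) = u(h) = 0. Define F : ℝ³ → ℝ³ by F(x,y,t) := (u(t)·H₁(x,y), u(t)·H₂(x,y), 0). Then on ω × (0,h): div F = 0 and curl (curl F) = d·F. Moreover F vanishes identically on the horizontal faces ω × {0,h}, so in particular e₃ × F = 0 there. -/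
noncomputable section

/-! Since `F = u(t)·(H₁(x,y), H₂(x,y), 0)` separates variables, every partial derivative falls on
one factor: `div F = u·div H` and
`curl curl F = (u·∂_y rot H − u''·H₁, −u''·H₂ − u·∂ₓ rot H, u'·div H)` with `rot H = ∂ₓH₂ − ∂_yH₁`.
These identities need no smoothness, because `deriv (fun s => c * f s) = c * deriv f` holds
unconditionally. At a point of `ω × (0,h)`, co-closedness kills `div H`; closedness on the open set
`ω` makes `rot H` vanish near the point, hence so do its partial derivatives; and `−u'' = d u`
turns what is left into `d·F`. On the faces `t = 0, h` the factor `u` vanishes. -/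

open Filter Topology

def temField (u : ℝ → ℝ) (H₁ H₂ : ℝ × ℝ → ℝ) (p : ℝ × ℝ × ℝ) : ℝ × ℝ × ℝ :=
  (u p.2.2 * H₁ (p.1, p.2.1), u p.2.2 * H₂ (p.1, p.2.1), 0)

def rot2 (H₁ H₂ : ℝ × ℝ → ℝ) (q : ℝ × ℝ) : ℝ :=
  pdx2 H₂ q - pdy2 H₁ q

def div2 (H₁ H₂ : ℝ × ℝ → ℝ) (q : ℝ × ℝ) : ℝ :=
  pdx2 H₁ q + pdy2 H₂ q

theorem pdx2_eq_zero_of_eventuallyEq_zero {g : ℝ × ℝ → ℝ} {q : ℝ × ℝ} (hg : g =ᶠ[𝓝 q] 0) :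
    pdx2 g q = 0 := by
  have hline : Tendsto (fun s : ℝ => (s, q.2)) (𝓝 q.1) (𝓝 q) :=
    (Continuous.prodMk_left q.2).tendsto' _ _ rfl
  simpa [pdx2, Function.comp_def] using (hg.comp_tendsto hline).deriv_eq

theorem pdy2_eq_zero_of_eventuallyEq_zero {g : ℝ × ℝ → ℝ} {q : ℝ × ℝ} (hg : g =ᶠ[𝓝 q] 0) :
    pdy2 g q = 0 := by
  have hline : Tendsto (fun s : ℝ => (q.1, s)) (𝓝 q.2) (𝓝 q) :=
    (Continuous.prodMk_right q.1).tendsto' _ _ rfl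
  simpa [pdy2, Function.comp_def] using (hg.comp_tendsto hline).deriv_eq

theorem rot2_eventuallyEq_zero {ω : Set (ℝ × ℝ)} (hω : IsOpen ω) {H₁ H₂ : ℝ × ℝ → ℝ}
    (hclosed : ∀ q ∈ ω, pdx2 H₂ q = pdy2 H₁ q) {q : ℝ × ℝ} (hq : q ∈ ω) :
    rot2 H₁ H₂ =ᶠ[𝓝 q] 0 := by
  filter_upwards [hω.mem_nhds hq] with r hr
  exact sub_eq_zero.mpr (hclosed r hr)

section temField

variable (u : ℝ → ℝ) (H₁ H₂ : ℝ × ℝ → ℝ)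

theorem div3_temField (p : ℝ × ℝ × ℝ) :
    div3 (temField u H₁ H₂) p = u p.2.2 * div2 H₁ H₂ (p.1, p.2.1) := by
  simp only [div3, pdx, pdy, pdt, div2, pdx2, pdy2, temField, deriv_const_mul_field, deriv_const']
  ring

theorem curl3_temField :
    curl3 (temField u H₁ H₂) = fun q =>
      (-(deriv u q.2.2 * H₂ (q.1, q.2.1)), deriv u q.2.2 * H₁ (q.1, q.2.1),
        u q.2.2 * rot2 H₁ H₂ (q.1, q.2.1)) := by
  funext q
  simp only [curl3, pdx, pdy, pdt, rot2, pdx2, pdy2, temField, deriv_const_mul_field,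
    deriv_mul_const_field, deriv_const', Prod.mk.injEq]
  exact ⟨by ring, by ring, by ring⟩

theorem curl3_curl3_temField (p : ℝ × ℝ × ℝ) :
    curl3 (curl3 (temField u H₁ H₂)) p =
      (u p.2.2 * pdy2 (rot2 H₁ H₂) (p.1, p.2.1) - deriv (deriv u) p.2.2 * H₁ (p.1, p.2.1),
        -(deriv (deriv u) p.2.2 * H₂ (p.1, p.2.1)) - u p.2.2 * pdx2 (rot2 H₁ H₂) (p.1, p.2.1),
        deriv u p.2.2 * div2 H₁ H₂ (p.1, p.2.1)) := by
  rw [curl3_temField]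
  simp only [curl3, pdx, pdy, pdt, div2, pdx2, pdy2, deriv_const_mul_field,
    deriv_mul_const_field, deriv.fun_neg, Prod.mk.injEq, true_and]
  ring

theorem temField_eq_zero {p : ℝ × ℝ × ℝ} (hu : u p.2.2 = 0) : temField u H₁ H₂ p = 0 := by
  simp [temField, hu]

end temField

theorem cross3_zero_right (a : ℝ × ℝ × ℝ) : cross3 a 0 = 0 := by
  simp [cross3]

theorem TEM_mode_eigenfunction_general (ω : Set (ℝ × ℝ)) (hω : IsOpen ω) (h : ℝ)
    (d : ℝ) (H₁ H₂ : ℝ × ℝ → ℝ) (u : ℝ → ℝ)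
    (hclosed : ∀ q ∈ ω, pdx2 H₂ q = pdy2 H₁ q)
    (hcoclosed : ∀ q ∈ ω, pdx2 H₁ q + pdy2 H₂ q = 0)
    (hueig : ∀ t ∈ Set.Icc (0 : ℝ) h, -(deriv (deriv u) t) = d * u t)
    (hu0 : u 0 = 0) (huh : u h = 0)
    (F : ℝ × ℝ × ℝ → ℝ × ℝ × ℝ)
    (hF : F = fun p =>
      (u p.2.2 * H₁ (p.1, p.2.1),
       u p.2.2 * H₂ (p.1, p.2.1),
       (0 : ℝ))) :
    (∀ p : ℝ × ℝ × ℝ, (p.1, p.2.1) ∈ ω → p.2.2 ∈ Set.Ioo (0 : ℝ) h →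
      div3 F p = 0 ∧ curl3 (curl3 F) p = d • F p) ∧
    (∀ p : ℝ × ℝ × ℝ, (p.1, p.2.1) ∈ ω → (p.2.2 = 0 ∨ p.2.2 = h) →
      F p = 0 ∧ cross3 ((0 : ℝ), (0 : ℝ), (1 : ℝ)) (F p) = 0) := by
  obtain rfl : F = temField u H₁ H₂ := hF
  refine ⟨fun p hp ht => ?_, fun p _ ht => ?_⟩
  · have hdiv : div2 H₁ H₂ (p.1, p.2.1) = 0 := hcoclosed _ hp
    have hrot := rot2_eventuallyEq_zero hω hclosed hp
    have hu'' : deriv (deriv u) p.2.2 = -(d * u p.2.2) :=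
      neg_eq_iff_eq_neg.mp (hueig _ (Set.Ioo_subset_Icc_self ht))
    refine ⟨by rw [div3_temField, hdiv, mul_zero], ?_⟩
    rw [curl3_curl3_temField, pdx2_eq_zero_of_eventuallyEq_zero hrot,
      pdy2_eq_zero_of_eventuallyEq_zero hrot, hdiv, hu'']
    simp only [temField, Prod.smul_mk, smul_eq_mul, Prod.mk.injEq]
    exact ⟨by ring, by ring, by ring⟩
  · have hF0 : temField u H₁ H₂ p = 0 :=
      temField_eq_zero u H₁ H₂ (by rcases ht with ht | ht <;> rwa [ht])
    exact ⟨hF0, by rw [hF0, cross3_zero_right]⟩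

/-- the TEM-family `F = (u·H₁, u·H₂, 0)`, with `(H₁,H₂)` a harmonic 1-form on `ω`
(`∂ₓH₂ = ∂_yH₁` and `∂ₓH₁ + ∂_yH₂ = 0` on `ω`) and `u` a Dirichlet eigenfunction on `(0,h)`
with eigenvalue `d`, is divergence free and satisfies `curl curl F = d·F` on `ω × (0,h)`;
moreover `F` vanishes identically on the horizontal faces `ω × {0,h}`, so `e₃ × F = 0` there. -/
theorem TEM_mode_eigenfunction (ω : Set (ℝ × ℝ)) (hω : IsOpen ω) (h : ℝ) (hh : 0 < h)
    (d : ℝ) (H₁ H₂ : ℝ × ℝ → ℝ) (u : ℝ → ℝ)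
    (hH₁ : ContDiff ℝ 1 H₁) (hH₂ : ContDiff ℝ 1 H₂) (hu : ContDiff ℝ 2 u)
    (hclosed : ∀ q ∈ ω, pdx2 H₂ q = pdy2 H₁ q)
    (hcoclosed : ∀ q ∈ ω, pdx2 H₁ q + pdy2 H₂ q = 0)
    (hueig : ∀ t ∈ Set.Icc (0 : ℝ) h, -(deriv (deriv u) t) = d * u t)
    (hu0 : u 0 = 0) (huh : u h = 0)
    (F : ℝ × ℝ × ℝ → ℝ × ℝ × ℝ)
    (hF : F = fun p =>
      (u p.2.2 * H₁ (p.1, p.2.1),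
       u p.2.2 * H₂ (p.1, p.2.1),
       (0 : ℝ))) :
    (∀ p : ℝ × ℝ × ℝ, (p.1, p.2.1) ∈ ω → p.2.2 ∈ Set.Ioo (0 : ℝ) h →
      div3 F p = 0 ∧ curl3 (curl3 F) p = d • F p) ∧
    (∀ p : ℝ × ℝ × ℝ, (p.1, p.2.1) ∈ ω → (p.2.2 = 0 ∨ p.2.2 = h) →
      F p = 0 ∧ cross3 ((0 : ℝ), (0 : ℝ), (1 : ℝ)) (F p) = 0) :=
  TEM_mode_eigenfunction_general ω hω h d H₁ H₂ u hclosed hcoclosed hueig hu0 huh F hF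
end
end
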